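/- Every integer occurs as a coefficient of some cyclotomic polynomial: for each c ∈ ℤ there exist n and m such that the coefficient of x^m in Φ_n equals c. -/

import Mathlib

/-!
Möbius inversion gives `Φₙ = ∏_{d ∣ n} (1 - X^d)^{μ(n/d)}` for `n > 1`. Let `N = p₁ ⋯ pₜ` with
`t` odd and primes `y ≤ p₁ < ⋯ < pₜ < 2y`. Modulo `X^(m+1)` with `m < 2y`, every divisor of `N`
other than `1` and the `pᵢ` exceeds `m`, and `∏ (1 - X^{pᵢ}) ≡ 1 - ∑ X^{pᵢ}` because `pᵢ + pⱼ > m`.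
As `t` is odd, `μ(N) = -1` and `μ(N/pᵢ) = 1`, so `Φ_N (1 - X) ≡ 1 - ∑ X^{pᵢ}`, and the
coefficient of `X^{p_r}` in `Φ_N` is `1 - r`. Positive values come from `Φ_{2N}(X) = Φ_N(-X)` at
the odd exponent `p_r`. Windows `[y, 2y)` with arbitrarily many primes exist since `∑ 1/p`
diverges.
-/

open Polynomial Finset ArithmeticFunction
open scoped ArithmeticFunction.Moebius

theorem Finset.prod_zpow_eq_zpow_sum {ι G₀ : Type*} [CommGroupWithZero G₀] {a : G₀} (ha : a ≠ 0)
    (s : Finset ι) (e : ι → ℤ) : ∏ i ∈ s, a ^ e i = a ^ ∑ i ∈ s, e i := by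
  classical
  induction s using Finset.induction_on with
  | empty => simp
  | insert i s hi ih => rw [prod_insert hi, sum_insert hi, ih, zpow_add₀ ha]

theorem Finset.prod_zpow_mul_prod_filter_eq_neg_one {ι M : Type*} [CommGroupWithZero M]
    (s : Finset ι) (f : ι → M) (e : ι → ℤ) (hf : ∀ i ∈ s, f i ≠ 0)
    (he : ∀ i ∈ s, e i = 0 ∨ e i = 1 ∨ e i = -1) :
    (∏ i ∈ s, f i ^ e i) * ∏ i ∈ s with e i = -1, f i = ∏ i ∈ s with e i = 1, f i := by
  rw [prod_filter, prod_filter, ← prod_mul_distrib]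
  refine prod_congr rfl fun i hi => ?_
  rcases he i hi with h | h | h <;> simp [h, hf i hi]

theorem Finset.exists_mem_card_filter_le_eq {α : Type*} [LinearOrder α] (s : Finset α) {r : ℕ}
    (hr : 1 ≤ r) (hrs : r ≤ #s) : ∃ m ∈ s, #{a ∈ s | a ≤ m} = r := by
  induction s using Finset.induction_on_max with
  | empty => rw [card_empty] at hrs; omega
  | insert a s hlt ih =>
    have ha : a ∉ s := fun h => lt_irrefl a (hlt a h)
    rw [card_insert_of_notMem ha] at hrs
    rcases hrs.lt_or_eq with hrs | hrs
    · obtain ⟨m, hm, hcard⟩ := ih (by omega)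
      refine ⟨m, mem_insert_of_mem hm, ?_⟩
      rwa [filter_insert, if_neg (not_le.mpr (hlt m hm))]
    · refine ⟨a, mem_insert_self a s, ?_⟩
      rw [filter_true_of_mem fun b hb => ?_, card_insert_of_notMem ha, hrs]
      rcases mem_insert.mp hb with rfl | hb
      exacts [le_rfl, (hlt b hb).le]

theorem ArithmeticFunction.sum_divisors_moebius_div_eq_zero {n : ℕ} (hn : 1 < n) :
    ∑ d ∈ n.divisors, μ (n / d) = 0 := by
  rw [Nat.sum_div_divisors, ← coe_mul_zeta_apply, moebius_mul_coe_zeta, one_apply_ne (by omega)]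

theorem ArithmeticFunction.moebius_prod_primes {P : Finset ℕ} (hP : ∀ p ∈ P, p.Prime) :
    μ (∏ p ∈ P, p) = (-1) ^ #P := by
  rw [isMultiplicative_moebius.map_prod_of_prime P hP,
    prod_congr rfl fun p hp => moebius_apply_prime (hP p hp), prod_const]

theorem IsPrimitiveRoot.neg_of_odd {K : Type*} [CommRing K] [IsDomain K] [CharZero K] {ζ : K}
    {n : ℕ} (hζ : IsPrimitiveRoot ζ n) (hn : Odd n) : IsPrimitiveRoot (-ζ) (2 * n) := by
  have h2 := (IsPrimitiveRoot.neg_one (R := K) 0 (by norm_num)).eq_orderOf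
  have h := IsPrimitiveRoot.orderOf (-1 * ζ)
  rwa [(Commute.all (-1 : K) ζ).orderOf_mul_eq_mul_orderOf_of_coprime
    (by rw [← h2, ← hζ.eq_orderOf]; exact Nat.coprime_two_left.mpr hn), ← h2, ← hζ.eq_orderOf,
    neg_one_mul] at h

theorem ArithmeticFunction.moebius_prod_primes_div {P : Finset ℕ} (hP : ∀ p ∈ P, p.Prime) {p : ℕ}
    (hp : p ∈ P) : μ ((∏ q ∈ P, q) / p) = (-1) ^ (#P - 1) := by
  rw [← mul_prod_erase P (fun q => q) hp, Nat.mul_div_cancel_left _ (hP p hp).pos,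
    moebius_prod_primes fun q hq => hP q (mem_of_mem_erase hq), card_erase_of_mem hp]

namespace Nat

theorem mem_of_prime_dvd_prod_primes {P : Finset ℕ} (hP : ∀ p ∈ P, p.Prime) {q : ℕ}
    (hq : q.Prime) (h : q ∣ ∏ p ∈ P, p) : q ∈ P := by
  obtain ⟨p, hp, hqp⟩ := (Prime.dvd_finsetProd_iff hq.prime _).mp h
  rwa [(Nat.prime_dvd_prime_iff_eq hq (hP p hp)).mp hqp]

/-- A divisor of `p₁ ⋯ pₜ` with two prime factors `q ≠ r` is at least `q * r ≥ q + r`. -/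
theorem eq_one_or_mem_or_lt_of_dvd_prod_primes {P : Finset ℕ} (hP : ∀ p ∈ P, p.Prime)
    {m : ℕ} (hsum : ∀ p ∈ P, ∀ q ∈ P, p ≠ q → m < p + q) {d : ℕ} (hd : d ∣ ∏ p ∈ P, p) :
    d = 1 ∨ d ∈ P ∨ m < d := by
  rcases eq_or_ne d 1 with rfl | hd1
  · exact Or.inl rfl
  obtain ⟨q, hq, e, rfl⟩ := Nat.exists_prime_and_dvd hd1
  have hqP := mem_of_prime_dvd_prod_primes hP hq (dvd_of_mul_right_dvd hd)
  rcases eq_or_ne e 1 with rfl | he1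
  · exact Or.inr (Or.inl (by rwa [mul_one]))
  obtain ⟨r, hr, hre⟩ := Nat.exists_prime_and_dvd he1
  rw [← mul_prod_erase P (fun p => p) hqP] at hd
  have heP : e ∣ ∏ p ∈ P.erase q, p := Nat.dvd_of_mul_dvd_mul_left hq.pos hd
  have hrP := mem_of_prime_dvd_prod_primes (fun p hp => hP p (mem_of_mem_erase hp)) hr
    (hre.trans heP)
  refine Or.inr (Or.inr ?_)
  calc m < q + r := hsum q hqP r (mem_of_mem_erase hrP) (ne_of_mem_erase hrP).symm
    _ ≤ q * r := Nat.add_le_mul hq.two_le hr.two_le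
    _ ≤ q * e := Nat.mul_le_mul_left q (Nat.le_of_dvd
        (Nat.pos_of_dvd_of_pos heP (prod_pos fun p hp => (hP p (mem_of_mem_erase hp)).pos)) hre)

/-- Otherwise `∑ 1/p` would be bounded by `s` on every dyadic block `[2ᵏ, 2ᵏ⁺¹)`, hence
convergent. -/
theorem exists_le_card_filter_prime_Ico (s : ℕ) : ∃ y : ℕ, s ≤ #{p ∈ Ico y (2 * y) | p.Prime} := by
  by_contra! h
  set f : ℕ → ℝ := {p : ℕ | p.Prime}.indicator fun n => 1 / n
  have hf : ∀ n, 0 ≤ f n := fun n => Set.indicator_nonneg (fun _ _ => by positivity) n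
  have hblock (k : ℕ) : ∑ i ∈ Ico (2 ^ k) (2 ^ (k + 1)), f i ≤ s * (1 / 2) ^ k := by
    rw [sum_indicator_eq_sum_filter]
    calc ∑ i ∈ Ico (2 ^ k) (2 ^ (k + 1)) with i ∈ {p : ℕ | p.Prime}, (1 / i : ℝ)
        ≤ #{i ∈ Ico (2 ^ k) (2 ^ (k + 1)) | i ∈ {p : ℕ | p.Prime}} • (1 / 2 : ℝ) ^ k := by
          refine sum_le_card_nsmul _ _ _ fun i hi => ?_
          rw [div_pow, one_pow]
          gcongr
          exact_mod_cast (mem_Ico.mp (mem_filter.mp hi).1).1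
      _ ≤ s * (1 / 2) ^ k := by
          rw [nsmul_eq_mul, pow_succ']
          gcongr
          exact_mod_cast (h (2 ^ k)).le
  have hdyadic (K : ℕ) : ∑ i ∈ range (2 ^ K), f i ≤ s * ∑ k ∈ range K, (1 / 2 : ℝ) ^ k := by
    induction K with
    | zero => simp [f, Nat.not_prime_zero]
    | succ K ih =>
      rw [← sum_range_add_sum_Ico _ (Nat.pow_le_pow_right two_pos K.le_succ), sum_range_succ,
        mul_add]
      exact _root_.add_le_add ih (hblock K)
  refine not_summable_one_div_on_primes (summable_of_sum_range_le hf (c := s * 2) fun n => ?_)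
  calc ∑ i ∈ range n, f i
      ≤ ∑ i ∈ range (2 ^ n), f i := sum_le_sum_of_subset_of_nonneg
        (range_subset_range.mpr n.lt_two_pow_self.le) fun i _ _ => hf i
    _ ≤ s * ∑ k ∈ range n, (1 / 2 : ℝ) ^ k := hdyadic n
    _ ≤ s * 2 := by gcongr; exact sum_geometric_two_le n

end Nat

namespace Polynomial

section CommRing

variable {R : Type*} [CommRing R] {m : ℕ}

theorem coeff_comp_neg_X (p : R[X]) (k : ℕ) : (p.comp (-X)).coeff k = (-1) ^ k * p.coeff k := by
  induction p using Polynomial.induction_on' with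
  | add p q hp hq => simp [add_comp, hp, hq, mul_add]
  | monomial n a =>
    rw [← C_mul_X_pow_eq_monomial, mul_comp, C_comp, X_pow_comp, neg_pow,
      show (-1 : R[X]) ^ n = C ((-1) ^ n) by simp, ← mul_assoc, ← C_mul, coeff_C_mul_X_pow,
      coeff_C_mul_X_pow]
    split_ifs with h
    · rw [h, mul_comm]
    · rw [mul_zero]

theorem X_pow_smodEq_zero {d : ℕ} (h : m < d) :
    (X : R[X]) ^ d ≡ 0 [SMOD Ideal.span {X ^ (m + 1)}] :=
  SModEq.zero.mpr (Ideal.mem_span_singleton.mpr (pow_dvd_pow X h))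

theorem prod_one_sub_X_pow_smodEq_of_subset {s t : Finset ℕ} (hts : t ⊆ s)
    (h : ∀ d ∈ s \ t, m < d) :
    ∏ d ∈ s, (1 - X ^ d : R[X]) ≡ ∏ d ∈ t, (1 - X ^ d) [SMOD Ideal.span {X ^ (m + 1)}] := by
  rw [← prod_sdiff hts]
  conv_rhs => rw [← one_mul (∏ d ∈ t, _)]
  refine SModEq.mul ?_ SModEq.rfl
  calc ∏ d ∈ s \ t, (1 - X ^ d : R[X])
      ≡ ∏ d ∈ s \ t, (1 - 0) [SMOD Ideal.span {(X : R[X]) ^ (m + 1)}] :=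
        SModEq.prod fun d hd => SModEq.rfl.sub (X_pow_smodEq_zero (h d hd))
    _ = 1 := by simp

theorem prod_one_sub_X_pow_smodEq (s : Finset ℕ) (h : ∀ p ∈ s, ∀ q ∈ s, p ≠ q → m < p + q) :
    ∏ p ∈ s, (1 - X ^ p : R[X]) ≡ 1 - ∑ p ∈ s, X ^ p [SMOD Ideal.span {X ^ (m + 1)}] := by
  classical
  induction s using Finset.induction_on with
  | empty => simp
  | insert a s ha ih =>
    have hcross : (X : R[X]) ^ a * ∑ p ∈ s, X ^ p ≡ 0 [SMOD Ideal.span {X ^ (m + 1)}] := by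
      simpa [mul_sum, ← pow_add] using SModEq.sum fun p hp => X_pow_smodEq_zero (R := R)
        (h a (mem_insert_self a s) p (mem_insert_of_mem hp) (ne_of_mem_of_not_mem hp ha).symm)
    have ih' := ih fun p hp q hq => h p (mem_insert_of_mem hp) q (mem_insert_of_mem hq)
    rw [prod_insert ha, sum_insert ha]
    calc (1 - X ^ a) * ∏ p ∈ s, (1 - X ^ p : R[X])
        ≡ (1 - X ^ a) * (1 - ∑ p ∈ s, X ^ p) [SMOD Ideal.span {(X : R[X]) ^ (m + 1)}] :=
          SModEq.rfl.mul ih'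
      _ = (1 : R[X]) - (X ^ a + ∑ p ∈ s, X ^ p) + X ^ a * ∑ p ∈ s, X ^ p := by ring
      _ ≡ (1 : R[X]) - (X ^ a + ∑ p ∈ s, X ^ p) + 0
          [SMOD Ideal.span {(X : R[X]) ^ (m + 1)}] := SModEq.rfl.add hcross
      _ = (1 : R[X]) - (X ^ a + ∑ p ∈ s, X ^ p) := add_zero _

theorem coeff_eq_of_smodEq {f g : R[X]} (h : f ≡ g [SMOD Ideal.span {X ^ (m + 1)}]) {k : ℕ}
    (hk : k ≤ m) : f.coeff k = g.coeff k := by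
  have := X_pow_dvd_iff.mp (Ideal.mem_span_singleton.mp (SModEq.sub_mem.mp h)) k (by omega)
  rwa [coeff_sub, sub_eq_zero] at this

theorem sum_range_coeff_mul_one_sub_X (f : R[X]) (m : ℕ) :
    ∑ k ∈ range (m + 1), (f * (1 - X)).coeff k = f.coeff m := by
  induction m with
  | zero => simp [mul_sub]
  | succ m ih => rw [sum_range_succ, ih, mul_sub, mul_one, coeff_sub, coeff_mul_X]; ring

theorem coeff_eq_sum_range_of_mul_one_sub_X_smodEq {f g : R[X]}
    (h : f * (1 - X) ≡ g [SMOD Ideal.span {X ^ (m + 1)}]) :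
    f.coeff m = ∑ k ∈ range (m + 1), g.coeff k := by
  rw [← sum_range_coeff_mul_one_sub_X]
  exact sum_congr rfl fun k hk => coeff_eq_of_smodEq h (Nat.lt_succ_iff.mp (mem_range.mp hk))

theorem sum_range_coeff_one_sub_sum_X_pow (P : Finset ℕ) (m : ℕ) :
    ∑ k ∈ range (m + 1), (1 - ∑ p ∈ P, X ^ p : R[X]).coeff k = 1 - #{p ∈ P | p ≤ m} := by
  simp [coeff_one, coeff_X_pow, sum_sub_distrib, inter_comm, ← filter_mem_eq_inter]

end CommRing

section IsDomain

variable {R : Type*} [CommRing R] [IsDomain R] {m : ℕ}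

theorem cyclotomic_eq_prod_one_sub_X_pow_pow_moebius {n : ℕ} (hn : 1 < n) :
    algebraMap R[X] (RatFunc R) (cyclotomic n R) =
      ∏ d ∈ n.divisors, algebraMap R[X] (RatFunc R) (1 - X ^ d) ^ μ (n / d) := by
  rw [cyclotomic_eq_prod_X_pow_sub_one_pow_moebius,
    Nat.prod_divisorsAntidiagonal' fun a b => algebraMap R[X] (RatFunc R) (X ^ b - 1) ^ μ a]
  have hneg (d : ℕ) : algebraMap R[X] (RatFunc R) (X ^ d - 1) =
      -1 * algebraMap R[X] (RatFunc R) (1 - X ^ d) := by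
    rw [← neg_sub, map_neg, neg_one_mul]
  simp_rw [hneg, mul_zpow, prod_mul_distrib]
  rw [prod_zpow_eq_zpow_sum (neg_ne_zero.mpr one_ne_zero), sum_divisors_moebius_div_eq_zero hn,
    zpow_zero, one_mul]

theorem cyclotomic_mul_prod_one_sub_X_pow {n : ℕ} (hn : 1 < n) :
    cyclotomic n R * ∏ d ∈ n.divisors with μ (n / d) = -1, (1 - X ^ d) =
      ∏ d ∈ n.divisors with μ (n / d) = 1, (1 - X ^ d) := by
  apply IsFractionRing.injective R[X] (RatFunc R)
  simp only [map_mul, map_prod]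
  rw [cyclotomic_eq_prod_one_sub_X_pow_pow_moebius hn]
  refine prod_zpow_mul_prod_filter_eq_neg_one _ _ _ (fun d hd => ?_) fun d _ => moebius_eq_or _
  rw [map_ne_zero_iff _ (IsFractionRing.injective R[X] (RatFunc R)), sub_ne_zero]
  intro h
  have := congrArg natDegree h
  simp only [natDegree_one, natDegree_X_pow] at this
  exact (Nat.pos_of_mem_divisors hd).ne this

theorem cyclotomic_prod_primes_mul_one_sub_X_smodEq {P : Finset ℕ} (hP : ∀ p ∈ P, p.Prime)
    (hodd : Odd #P) (hsum : ∀ p ∈ P, ∀ q ∈ P, p ≠ q → m < p + q) :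
    cyclotomic (∏ p ∈ P, p) R * (1 - X) ≡ 1 - ∑ p ∈ P, X ^ p [SMOD Ideal.span {X ^ (m + 1)}] := by
  set N := ∏ p ∈ P, p
  have hN0 : N ≠ 0 := prod_ne_zero_iff.mpr fun p hp => (hP p hp).ne_zero
  obtain ⟨p₀, hp₀⟩ := card_pos.mp hodd.pos
  have hN1 : 1 < N :=
    (hP p₀ hp₀).one_lt.trans_le (Nat.le_of_dvd (Nat.pos_of_ne_zero hN0) (dvd_prod_of_mem _ hp₀))
  have hμN : μ N = -1 := by rw [moebius_prod_primes hP, hodd.neg_one_pow]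
  have hμp : ∀ p ∈ P, μ (N / p) = 1 := fun p hp => by
    rw [moebius_prod_primes_div hP hp, (Nat.Odd.sub_odd hodd odd_one).neg_one_pow]
  have hsmall : ∀ d ∈ N.divisors, d = 1 ∨ d ∈ P ∨ m < d := fun d hd =>
    Nat.eq_one_or_mem_or_lt_of_dvd_prod_primes hP hsum (Nat.dvd_of_mem_divisors hd)
  have hneg : ∏ d ∈ N.divisors with μ (N / d) = -1, (1 - X ^ d : R[X]) ≡ ∏ d ∈ {1}, (1 - X ^ d)
      [SMOD Ideal.span {X ^ (m + 1)}] := by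
    refine prod_one_sub_X_pow_smodEq_of_subset (by simp [hN0, hμN]) fun d hd => ?_
    simp only [mem_sdiff, mem_filter, mem_singleton] at hd
    rcases hsmall d hd.1.1 with h | h | h
    · exact absurd h hd.2
    · simp [hμp d h] at hd
    · exact h
  have hpos : ∏ d ∈ N.divisors with μ (N / d) = 1, (1 - X ^ d : R[X]) ≡ ∏ p ∈ P, (1 - X ^ p)
      [SMOD Ideal.span {X ^ (m + 1)}] := by
    refine prod_one_sub_X_pow_smodEq_of_subset (fun p hp => ?_) fun d hd => ?_
    · exact mem_filter.mpr ⟨Nat.mem_divisors.mpr ⟨dvd_prod_of_mem _ hp, hN0⟩, hμp p hp⟩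
    simp only [mem_sdiff, mem_filter] at hd
    rcases hsmall d hd.1.1 with h | h | h
    · simp [h, hμN] at hd
    · exact absurd h hd.2
    · exact h
  calc cyclotomic N R * (1 - X)
      ≡ cyclotomic N R * ∏ d ∈ N.divisors with μ (N / d) = -1, (1 - X ^ d)
        [SMOD Ideal.span {(X : R[X]) ^ (m + 1)}] := SModEq.rfl.mul (by simpa using hneg.symm)
    _ = ∏ d ∈ N.divisors with μ (N / d) = 1, (1 - X ^ d) := cyclotomic_mul_prod_one_sub_X_pow hN1
    _ ≡ 1 - ∑ p ∈ P, X ^ p [SMOD Ideal.span {(X : R[X]) ^ (m + 1)}] :=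
      hpos.trans (prod_one_sub_X_pow_smodEq P hsum)

theorem coeff_cyclotomic_prod_primes {P : Finset ℕ} (hP : ∀ p ∈ P, p.Prime) (hodd : Odd #P)
    (hsum : ∀ p ∈ P, ∀ q ∈ P, p ≠ q → m < p + q) :
    (cyclotomic (∏ p ∈ P, p) R).coeff m = 1 - #{p ∈ P | p ≤ m} := by
  rw [coeff_eq_sum_range_of_mul_one_sub_X_smodEq
    (cyclotomic_prod_primes_mul_one_sub_X_smodEq hP hodd hsum), sum_range_coeff_one_sub_sum_X_pow]

end IsDomain

theorem cyclotomic_two_mul_of_odd {R : Type*} [CommRing R] {n : ℕ} (hn : Odd n) (h1 : 1 < n) :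
    cyclotomic (2 * n) R = (cyclotomic n R).comp (-X) := by
  suffices h : cyclotomic (2 * n) ℤ = (cyclotomic n ℤ).comp (-X) by
    rw [← map_cyclotomic_int, h, map_comp, map_cyclotomic_int, Polynomial.map_neg, map_X]
  have h2 : 2 < n := by obtain ⟨k, rfl⟩ := hn; omega
  have hζ := Complex.isPrimitiveRoot_exp n (by omega)
  have hneg := hζ.neg_of_odd hn
  have hmonic : ((cyclotomic n ℤ).comp (-X)).Monic := by
    have := (cyclotomic.monic n ℤ).neg_one_pow_natDegree_mul_comp_neg_X
    rwa [natDegree_cyclotomic, (Nat.totient_even h2).neg_one_pow, one_mul] at this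
  refine (eq_of_monic_of_dvd_of_natDegree_le (cyclotomic.monic _ ℤ) hmonic ?_ ?_).symm
  · rw [cyclotomic_eq_minpoly hneg (by omega)]
    refine minpoly.isIntegrallyClosed_dvd (hneg.isIntegral (by omega)) ?_
    simpa [aeval_def, eval₂_eq_eval_map, map_comp, map_cyclotomic] using
      hζ.isRoot_cyclotomic (by omega)
  · rw [natDegree_comp, natDegree_cyclotomic, natDegree_cyclotomic, natDegree_neg, natDegree_X,
      Nat.totient_mul (Nat.coprime_two_left.mpr hn), Nat.totient_two]
    simp

end Polynomial

theorem Nat.exists_finset_odd_primes_Ico (t : ℕ) :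
    ∃ y : ℕ, ∃ P : Finset ℕ, #P = t ∧ ∀ p ∈ P, p.Prime ∧ p ≠ 2 ∧ y ≤ p ∧ p < 2 * y := by
  obtain ⟨y, hy⟩ := exists_le_card_filter_prime_Ico (t + 1)
  have ht : t ≤ #({p ∈ Ico y (2 * y) | p.Prime}.erase 2) :=
    (Nat.le_sub_of_add_le hy).trans pred_card_le_card_erase
  obtain ⟨P, hPsub, hPcard⟩ := exists_subset_card_eq ht
  refine ⟨y, P, hPcard, fun p hp => ?_⟩
  have := hPsub hp
  simp only [mem_erase, mem_filter, mem_Ico] at this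
  tauto

theorem exists_odd_coeff_cyclotomic_eq_one_sub (r : ℕ) (hr : 1 ≤ r) :
    ∃ n m : ℕ, Odd n ∧ 1 < n ∧ Odd m ∧ (cyclotomic n ℤ).coeff m = 1 - r := by
  obtain ⟨y, P, hPcard, hPmem⟩ := Nat.exists_finset_odd_primes_Ico (2 * r + 1)
  have hprime : ∀ p ∈ P, p.Prime := fun p hp => (hPmem p hp).1
  obtain ⟨m, hmP, hrank⟩ := exists_mem_card_filter_le_eq P hr (by omega)
  obtain ⟨hm, hm2, -, hmy⟩ := hPmem m hmP
  have hsum : ∀ p ∈ P, ∀ q ∈ P, p ≠ q → m < p + q := fun p hp q hq _ => by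
    have := (hPmem p hp).2.2.1
    have := (hPmem q hq).2.2.1
    omega
  refine ⟨∏ p ∈ P, p, m, ?_, ?_, hm.odd_of_ne_two hm2, ?_⟩
  · refine Nat.not_even_iff_odd.mp fun h => ?_
    exact (hPmem 2 (Nat.mem_of_prime_dvd_prod_primes hprime Nat.prime_two
      (even_iff_two_dvd.mp h))).2.1 rfl
  · exact hm.one_lt.trans_le
      (Nat.le_of_dvd (prod_pos fun p hp => (hprime p hp).pos) (dvd_prod_of_mem _ hmP))
  · rw [coeff_cyclotomic_prod_primes hprime (hPcard ▸ odd_two_mul_add_one r) hsum, hrank]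

theorem stmt6 (c : ℤ) : ∃ n m : ℕ, (Polynomial.cyclotomic n ℤ).coeff m = c := by
  rcases le_or_gt c 0 with hc | hc
  · obtain ⟨n, m, -, -, -, h⟩ := exists_odd_coeff_cyclotomic_eq_one_sub (1 - c).toNat (by omega)
    exact ⟨n, m, by rw [h]; omega⟩
  · obtain ⟨n, m, hn, hn1, hm, h⟩ := exists_odd_coeff_cyclotomic_eq_one_sub (c + 1).toNat (by omega)
    refine ⟨2 * n, m, ?_⟩
    rw [cyclotomic_two_mul_of_odd hn hn1, coeff_comp_neg_X, h, hm.neg_one_pow]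
    omega
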